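/- arXiv:2605.07663 — 2 statements merged into one kernel-verified Lean document; each statement's English description precedes it below -/
import Mathlib

section
/- There is no attribution mechanism that is simultaneously exactly Shapley-fair on every reported game and false-name-proof on the class of finite monotone {0,1}-valued cooperative games. Precisely: let p be any mechanism that, for every finite monotone cooperative game v with values in {0,1} and every player j of v, pays p_j(v) = Sh_j(v). Then p is not false-name-proof: for the two-player unanimity game u_{{A,B}}, player A receives p_A = 1/2, while in the three-player unanimity game u_{{A₁,A₂,B}} obtained when A replaces itself by the two pseudonyms A₁, A₂, the pseudonyms jointly receive p_{A₁} + p_{A₂} = 1/3 + 1/3 = 2/3 > 1/2, so the latent provider A strictly increases its total payment by the false-name split. -/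
open Finset

/-- The Shapley value of player `i` in the cooperative game `v` on the full
finite player set of type `ι`. -/
noncomputable def shapley {ι : Type*} [Fintype ι] [DecidableEq ι]
    (v : Finset ι → ℝ) (i : ι) : ℝ :=
  ∑ T ∈ ((Finset.univ : Finset ι).erase i).powerset,
    ((Nat.factorial T.card * Nat.factorial (Fintype.card ι - 1 - T.card) : ℝ) /
      Nat.factorial (Fintype.card ι)) * (v (insert i T) - v T)

/-- The unanimity game on the player set `N`. -/
noncomputable def unanimity {ι : Type*} [DecidableEq ι]
    (N : Finset ι) (T : Finset ι) : ℝ :=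
  if N ⊆ T then 1 else 0

/-!
In the unanimity game on `n` players, player `i` has a nonzero marginal contribution only to
the coalition of all other players, whose Shapley weight is `(n - 1)! 0! / n! = 1 / n`. So every
player earns `1 / n`, and splitting one of two players into two pseudonyms raises its share
from `1 / 2` to `2 / 3`.
-/

section Unanimity

variable {ι : Type*} [DecidableEq ι]

theorem unanimity_empty {N : Finset ι} (hN : N.Nonempty) : unanimity N ∅ = 0 :=
  if_neg fun h => hN.ne_empty (subset_empty.mp h)

theorem unanimity_monotone (N : Finset ι) : Monotone (unanimity N) := by
  intro T T' hT
  unfold unanimity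
  split_ifs with h h' h'
  exacts [le_rfl, absurd (h.trans hT) h', zero_le_one, le_rfl]

theorem unanimity_eq_zero_or_eq_one (N T : Finset ι) :
    unanimity N T = 0 ∨ unanimity N T = 1 := by
  unfold unanimity
  split_ifs <;> simp

variable [Fintype ι]

theorem unanimity_univ_of_notMem {i : ι} {T : Finset ι} (hi : i ∉ T) :
    unanimity univ T = 0 :=
  if_neg fun h => hi (h (mem_univ i))

theorem unanimity_univ_insert_of_ne {i : ι} {T : Finset ι} (hT : T ⊆ univ.erase i)
    (hne : T ≠ univ.erase i) : unanimity univ (insert i T) = 0 := by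
  refine if_neg fun h => hne (hT.antisymm fun j hj => ?_)
  exact (mem_insert.mp (h (mem_univ j))).resolve_left (ne_of_mem_erase hj)

theorem shapley_unanimity_univ (i : ι) :
    shapley (unanimity univ) i = 1 / Fintype.card ι := by
  have hn : 0 < Fintype.card ι := Fintype.card_pos_iff.mpr ⟨i⟩
  rw [shapley, sum_eq_single_of_mem _ (mem_powerset_self _) fun T hT hne => by
      rw [unanimity_univ_insert_of_ne (mem_powerset.mp hT) hne,
        unanimity_univ_of_notMem fun hi => notMem_erase i univ (mem_powerset.mp hT hi),
        sub_self, mul_zero],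
    insert_erase (mem_univ i), unanimity_univ_of_notMem (notMem_erase i univ),
    card_erase_of_mem (mem_univ i), card_univ, Nat.sub_self, Nat.factorial_zero,
    ← Nat.mul_factorial_pred hn.ne']
  simp only [unanimity, subset_refl, if_true, sub_zero, mul_one]
  push_cast
  field_simp

end Unanimity

/-- Exact reported-game Shapley fairness on finite monotone {0,1}-valued games is
incompatible with false-name-proofness: with such a mechanism, in the two-player
unanimity game player `A` receives `1/2`, while after splitting into pseudonyms
`A₁, A₂` (yielding the three-player unanimity game) the pseudonyms jointly receive
`2/3 > 1/2`. -/
theorem shapley_fair_not_false_name_proof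
    (p : ∀ n : ℕ, (Finset (Fin n) → ℝ) → Fin n → ℝ)
    (hfair : ∀ (n : ℕ) (v : Finset (Fin n) → ℝ),
      v ∅ = 0 →
      (∀ T T' : Finset (Fin n), T ⊆ T' → v T ≤ v T') →
      (∀ T : Finset (Fin n), v T = 0 ∨ v T = 1) →
      ∀ j : Fin n, p n v j = shapley v j) :
    p 2 (unanimity (Finset.univ : Finset (Fin 2))) 0 = 1 / 2 ∧
    p 3 (unanimity (Finset.univ : Finset (Fin 3))) 0 +
      p 3 (unanimity (Finset.univ : Finset (Fin 3))) 1 = 1 / 3 + 1 / 3 ∧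
    p 3 (unanimity (Finset.univ : Finset (Fin 3))) 0 +
      p 3 (unanimity (Finset.univ : Finset (Fin 3))) 1 >
      p 2 (unanimity (Finset.univ : Finset (Fin 2))) 0 := by
  have hpay : ∀ (n : ℕ) (i : Fin n), p n (unanimity univ) i = 1 / n := fun n i => by
    rw [hfair n _ (unanimity_empty ⟨i, mem_univ i⟩) (unanimity_monotone _)
      (unanimity_eq_zero_or_eq_one _), shapley_unanimity_univ, Fintype.card_fin]
  simp only [hpay]
  norm_num
end

section
/- Approximate false-name-proofness under clustering leakage: let K be a finite set of honest clusters with true semivalues φ : K → ℝ and estimates φ̂ satisfying |φ̂_k − φ_k| ≤ η for every k ∈ K. Suppose a manipulation by provider i produces a manipulated quotient game whose cluster set is K ∪ E, where every honest cluster k ∈ K is matched and E is a finite set of escaped clusters disjoint from K; let φ^α denote the true semivalues of the manipulated game and φ̂^α estimates with |φ̂^α_k − φ^α_k| ≤ η for every k ∈ K ∪ E. Let a_{i,k} ∈ [0,1] be the honest shares, and let the manipulated shares a^α_{j,k} over the pseudonym set J satisfy Σ_{j ∈ J} a^α_{j,k} = a_{i,k} for every matched cluster k ∈ K and Σ_{j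 ∈ J} a^α_{j,k} ≤ 1 for every escaped cluster k ∈ E. Define the escaped-cluster mass L = Σ_{k ∈ E} |φ^α_k|, the matched-cluster drift D = Σ_{k ∈ K} |φ^α_k − φ_k|, and K_α = |K| + |E|. Then the additive manipulation gain with estimated payments satisfies Σ_{j ∈ J} Σ_{k ∈ K ∪ E} a^α_{j,k} · φ̂^α_k − Σ_{k ∈ K} a_{i,k} · φ̂_k ≤ L + D + 2 · K_α · η. -/
open Finset

/-!
Regroup the pseudonyms' total payment by cluster. On a matched cluster the pseudonyms' shares
add up to the honest share `a k ≤ 1`, so the gain there is at most `|φ̂^α_k - φ̂_k|`, which is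
within `2η` of the drift `|φ^α_k - φ_k|`. On an escaped cluster the total share lies in `[0,1]`,
so the payment is at most `|φ̂^α_k| ≤ |φ^α_k| + η`.
-/

section LinearOrderedRing

variable {R : Type*} [Ring R] [LinearOrder R] [IsStrictOrderedRing R]

lemma mul_le_abs_of_nonneg_of_le_one {s : R} (x : R) (hs0 : 0 ≤ s) (hs1 : s ≤ 1) :
    s * x ≤ |x| :=
  calc s * x ≤ |s * x| := le_abs_self _
    _ = s * |x| := by rw [abs_mul, abs_of_nonneg hs0]
    _ ≤ |x| := mul_le_of_le_one_left (abs_nonneg x) hs1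

lemma abs_le_abs_add_of_abs_sub_le {x x' η : R} (h : |x' - x| ≤ η) : |x'| ≤ |x| + η :=
  sub_le_iff_le_add'.mp ((abs_sub_abs_le_abs_sub x' x).trans h)

lemma abs_sub_le_abs_sub_add_of_abs_sub_le {x x' y y' η : R}
    (hx : |x' - x| ≤ η) (hy : |y' - y| ≤ η) : |x' - y'| ≤ |x - y| + 2 * η := by
  have hy' : |y - y'| ≤ η := by rwa [abs_sub_comm]
  calc |x' - y'| ≤ |x' - x| + (|x - y| + |y - y'|) :=
        (abs_sub_le x' x y').trans (add_le_add_right (abs_sub_le x y y') _)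
    _ ≤ η + (|x - y| + η) := by gcongr
    _ = |x - y| + 2 * η := by rw [two_mul]; abel

lemma sum_le_sum_add_card_mul {ι : Type*} [Fintype ι] {f g : ι → R} {c : R}
    (h : ∀ i, f i ≤ g i + c) : ∑ i, f i ≤ ∑ i, g i + Fintype.card ι * c :=
  (sum_le_sum fun i _ => h i).trans_eq <| by
    rw [sum_add_distrib, sum_const, card_univ, nsmul_eq_mul]

end LinearOrderedRing

/-- Approximate false-name-proofness under clustering leakage: with matched
clusters `K` and escaped clusters `E` (disjoint, modelled by the sum type
`K ⊕ E`), per-cluster semivalue estimation error at most `η`, honest shares in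
`[0,1]`, false-name-neutral manipulated shares on matched clusters and total
share at most one on escaped clusters, the additive manipulation gain with
estimated payments is at most `L + D + 2 * K_α * η`, where `L` is the
escaped-cluster mass, `D` the matched-cluster drift, and `K_α = |K| + |E|`. -/
theorem approximate_false_name_proofness
    {K E J : Type*} [Fintype K] [Fintype E] [Fintype J]
    (φ φhat : K → ℝ)              -- true / estimated honest cluster semivalues
    (φα φαhat : K ⊕ E → ℝ)        -- true / estimated manipulated semivalues
    (η : ℝ)
    (hφhat : ∀ k : K, |φhat k - φ k| ≤ η)
    (hφαhat : ∀ c : K ⊕ E, |φαhat c - φα c| ≤ η)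
    (a : K → ℝ)                   -- honest shares of provider i
    (ha0 : ∀ k : K, 0 ≤ a k) (ha1 : ∀ k : K, a k ≤ 1)
    (aα : J → K ⊕ E → ℝ)          -- manipulated shares of the pseudonyms
    (haα0 : ∀ (j : J) (c : K ⊕ E), 0 ≤ aα j c)
    (hmatched : ∀ k : K, ∑ j : J, aα j (Sum.inl k) = a k)
    (hescaped : ∀ e : E, ∑ j : J, aα j (Sum.inr e) ≤ 1) :
    ∑ j : J, ∑ c : K ⊕ E, aα j c * φαhat c - ∑ k : K, a k * φhat k ≤
      (∑ e : E, |φα (Sum.inr e)|) + (∑ k : K, |φα (Sum.inl k) - φ k|) +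
        2 * (Fintype.card K + Fintype.card E) * η := by
  have regroup : ∑ j : J, ∑ c : K ⊕ E, aα j c * φαhat c =
      ∑ k : K, a k * φαhat (Sum.inl k) +
        ∑ e : E, (∑ j : J, aα j (Sum.inr e)) * φαhat (Sum.inr e) := by
    rw [sum_comm, Fintype.sum_sum_type]
    simp only [← sum_mul, hmatched]
  have matched_gain : ∀ k : K, a k * φαhat (Sum.inl k) - a k * φhat k ≤
      |φα (Sum.inl k) - φ k| + 2 * η := fun k =>
    calc a k * φαhat (Sum.inl k) - a k * φhat k
        = a k * (φαhat (Sum.inl k) - φhat k) := (mul_sub _ _ _).symm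
      _ ≤ |φαhat (Sum.inl k) - φhat k| := mul_le_abs_of_nonneg_of_le_one _ (ha0 k) (ha1 k)
      _ ≤ |φα (Sum.inl k) - φ k| + 2 * η :=
        abs_sub_le_abs_sub_add_of_abs_sub_le (hφαhat _) (hφhat k)
  have escaped_payment : ∀ e : E, (∑ j : J, aα j (Sum.inr e)) * φαhat (Sum.inr e) ≤
      |φα (Sum.inr e)| + 2 * η := fun e => by
    have hη : 0 ≤ η := (abs_nonneg _).trans (hφαhat (Sum.inr e))
    calc (∑ j : J, aα j (Sum.inr e)) * φαhat (Sum.inr e)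
        ≤ |φαhat (Sum.inr e)| := mul_le_abs_of_nonneg_of_le_one _
          (sum_nonneg fun j _ => haα0 j _) (hescaped e)
      _ ≤ |φα (Sum.inr e)| + η := abs_le_abs_add_of_abs_sub_le (hφαhat _)
      _ ≤ |φα (Sum.inr e)| + 2 * η := by linarith
  have hK := sum_le_sum_add_card_mul matched_gain
  have hE := sum_le_sum_add_card_mul escaped_payment
  rw [sum_sub_distrib] at hK
  rw [regroup]
  linarith
end
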